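/- Fix integers n ≥ 2, N ≥ 1 and κ ≥ 1, maps f : ℝ^(2n−1) × ℝ → ℝ and ĉ : ℝ × ℝ^(2n−1) → ℝ, a dataset of triples (y_i⁺, ζ_i, u_i) ∈ ℝ × ℝ^(2n−1) × ℝ, i = 1,…,N, and δ > 0. Suppose a sequence of sets (A^j)_{j≥0} in ℝ^(2n−1) satisfies A⁰ ⊆ S_δ, A^{j+1} ⊆ R⁻(A^j) for all j ≥ 0, and A⁰ ⊆ A¹. Then for every ζ₀ ∈ A^κ there exists a sequence of indices i : {1,2,3,…} → {1,…,N} such that the closed-loop trajectory defined by ζ_t := Φ(ζ_{t−1}, y_{i(t)}⁺) for t ≥ 1 satisfies |(ζ_t)ₙ| ≤ δ for all t ≥ κ. -/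

import Mathlib

/-!
Backward reachability lets a state of `A^κ` be steered into `A^(κ-1)`, then `A^(κ-2)`, …,
reaching `A^0` at time `κ`. Since `A^0 ⊆ A^1 ⊆ R⁻(A^0)`, the set `A^0` is controlled
invariant, so the trajectory can be kept in `A^0 ⊆ S_δ` forever after.
-/

/-- The closed-loop one-step map with reference `yr`:
`Φ(ζ, yr) = (y₂,…,yₙ, f(ζ, ĉ(yr, ζ)), u₂,…,u_{n−1}, ĉ(yr, ζ))` for the augmented
state `ζ = (y₁,…,yₙ,u₁,…,u_{n−1}) ∈ ℝ^(2n−1)` (0-indexed coordinates). -/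
noncomputable def Phi (n : ℕ) (f : EuclideanSpace ℝ (Fin (2*n-1)) → ℝ → ℝ)
    (chat : ℝ → EuclideanSpace ℝ (Fin (2*n-1)) → ℝ)
    (ζ : EuclideanSpace ℝ (Fin (2*n-1))) (yr : ℝ) : EuclideanSpace ℝ (Fin (2*n-1)) :=
  WithLp.toLp 2 fun (k : Fin (2*n-1)) =>
    if (k : ℕ) = n - 1 then f ζ (chat yr ζ)
    else if h : (k : ℕ) = 2*n - 2 then chat yr ζ
    else ζ ⟨(k : ℕ) + 1, by have := k.isLt; omega⟩

/-- For a data triple `(y_i⁺, ζ_i, u_i)`, the shifted successor state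
`ζ_i⁺ = (y_{i,2},…,y_{i,n}, y_i⁺, u_{i,2},…,u_{i,n−1}, u_i)`. -/
noncomputable def zplus (n : ℕ) (yp : ℝ) (ζ : EuclideanSpace ℝ (Fin (2*n-1))) (ui : ℝ) :
    EuclideanSpace ℝ (Fin (2*n-1)) :=
  WithLp.toLp 2 fun (k : Fin (2*n-1)) =>
    if (k : ℕ) = n - 1 then yp
    else if h : (k : ℕ) = 2*n - 2 then ui
    else ζ ⟨(k : ℕ) + 1, by have := k.isLt; omega⟩

/-- Backward reachable set `R⁻(A) = {ζ : ∃ i, Φ(ζ, y_i⁺) ∈ A}`. -/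
def Rminus (n N : ℕ) (f : EuclideanSpace ℝ (Fin (2*n-1)) → ℝ → ℝ)
    (chat : ℝ → EuclideanSpace ℝ (Fin (2*n-1)) → ℝ) (yd : Fin N → ℝ)
    (A : Set (EuclideanSpace ℝ (Fin (2*n-1)))) : Set (EuclideanSpace ℝ (Fin (2*n-1))) :=
  {ζ | ∃ i : Fin N, Phi n f chat ζ (yd i) ∈ A}

/-- `S_δ = {ζ : |ζₙ| ≤ δ}` (the n-th coordinate is index `n-1`, 0-indexed). -/
def Sdelta (n : ℕ) (hn : 1 ≤ n) (δ : ℝ) : Set (EuclideanSpace ℝ (Fin (2*n-1))) :=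
  {ζ | |ζ ⟨n - 1, by omega⟩| ≤ δ}

section Trajectory

variable {α ι : Type*} (g : α → ι → α)

theorem exists_trajectory_forall_mem (B : ℕ → Set α)
    (hB : ∀ t, ∀ x ∈ B t, ∃ i, g x i ∈ B (t + 1)) {x : α} (hx : x ∈ B 0) :
    ∃ (idx : ℕ → ι) (traj : ℕ → α), traj 0 = x ∧
      (∀ t, traj (t + 1) = g (traj t) (idx (t + 1))) ∧ ∀ t, traj t ∈ B t := by
  choose sel hsel using hB
  let state : (t : ℕ) → B t := fun t =>
    Nat.rec ⟨x, hx⟩ (fun t p => ⟨g p.1 (sel t p.1 p.2), hsel t p.1 p.2⟩) t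
  exact ⟨fun t => sel (t - 1) (state (t - 1)).1 (state (t - 1)).2, fun t => (state t).1,
    rfl, fun _ => rfl, fun t => (state t).2⟩

/-- Since `0 - 1 = 0` in `ℕ`, the case `m = 0` says that `A 0` can be steered into itself. -/
theorem exists_step_mem_pred (A : ℕ → Set α)
    (hA : ∀ j, A (j + 1) ⊆ {x | ∃ i, g x i ∈ A j}) (hA01 : A 0 ⊆ A 1) :
    ∀ m, ∀ x ∈ A m, ∃ i, g x i ∈ A (m - 1)
  | 0, _, hx => hA 0 (hA01 hx)
  | j + 1, _, hx => hA j hx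

theorem exists_trajectory_mem_zero_of_le (A : ℕ → Set α)
    (hA : ∀ j, A (j + 1) ⊆ {x | ∃ i, g x i ∈ A j}) (hA01 : A 0 ⊆ A 1)
    {κ : ℕ} {x : α} (hx : x ∈ A κ) :
    ∃ (idx : ℕ → ι) (traj : ℕ → α), traj 0 = x ∧
      (∀ t, traj (t + 1) = g (traj t) (idx (t + 1))) ∧ ∀ t, κ ≤ t → traj t ∈ A 0 := by
  have hB : ∀ t, ∀ y ∈ A (κ - t), ∃ i, g y i ∈ A (κ - (t + 1)) := fun t y hy => by
    simpa only [Nat.sub_sub] using exists_step_mem_pred g A hA hA01 (κ - t) y hy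
  obtain ⟨idx, traj, h0, hstep, hmem⟩ :=
    exists_trajectory_forall_mem g (fun t => A (κ - t)) hB hx
  refine ⟨idx, traj, h0, hstep, fun t ht => ?_⟩
  simpa only [Nat.sub_eq_zero_of_le ht] using hmem t

end Trajectory

/-- Lemma 3: if additionally `A⁰ ⊆ A¹`, then from any `ζ₀ ∈ A^κ`
there is an infinite sequence of reference indices whose closed-loop trajectory
satisfies `|(ζ_t)ₙ| ≤ δ` for all `t ≥ κ` (practical output regulation). -/
theorem stmt_6 (n N κ : ℕ) (hn : 2 ≤ n)
    (f : EuclideanSpace ℝ (Fin (2*n-1)) → ℝ → ℝ)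
    (chat : ℝ → EuclideanSpace ℝ (Fin (2*n-1)) → ℝ)
    (yd : Fin N → ℝ)
    (δ : ℝ)
    (A : ℕ → Set (EuclideanSpace ℝ (Fin (2*n-1))))
    (hA0 : A 0 ⊆ Sdelta n (by omega) δ)
    (hAsucc : ∀ j : ℕ, A (j+1) ⊆ Rminus n N f chat yd (A j))
    (hA01 : A 0 ⊆ A 1) :
    ∀ ζ0 ∈ A κ, ∃ (idx : ℕ → Fin N) (traj : ℕ → EuclideanSpace ℝ (Fin (2*n-1))),
      traj 0 = ζ0 ∧
      (∀ t : ℕ, traj (t+1) = Phi n f chat (traj t) (yd (idx (t+1)))) ∧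
      (∀ t : ℕ, κ ≤ t → |traj t ⟨n - 1, by omega⟩| ≤ δ) := by
  intro ζ0 hζ0
  obtain ⟨idx, traj, h0, hstep, hmem⟩ :=
    exists_trajectory_mem_zero_of_le (fun ζ i => Phi n f chat ζ (yd i)) A hAsucc hA01 hζ0
  exact ⟨idx, traj, h0, hstep, fun t ht => hA0 (hmem t ht)⟩
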